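/- Product of two T-depth-1 blocks (Pauli-fixing version): let C₁, C₂ be unitary 2^n × 2^n complex matrices and S₁, S₂ ⊆ {1,…,n} disjoint sets of qubits, and for each i ∈ S₁ ∪ S₂ let T̄_{(i)} ∈ {T_{(i)}, T_{(i)}†}. Suppose (i) C₂ Z_{(i)} C₂† = Z_{(i)} for all i ∈ S₁, and (ii) for every j ∈ S₂, the matrix P_j := C₂ Z_{(j)} C₂† satisfies C₁ P_j C₁† = P_j. Then (C₁ (∏_{i∈S₁} T̄_{(i)}) C₁†) · (C₂ (∏_{j∈S₂} T̄_{(j)}) C₂†) = (C₁C₂) (∏_{k∈S₁∪S₂} T̄_{(k)}) (C₁C₂)†; in particular no commutation condition between C₁ and C₂ is needed. -/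
import Mathlib


open Matrix Complex

noncomputable section

/-- The single-qubit T gate `diag(1, e^{iπ/4})`. -/
def Tgate : Matrix (Fin 2) (Fin 2) ℂ :=
  !![1, 0; 0, Complex.exp (Real.pi * Complex.I / 4)]

/-- The single-qubit Pauli Z gate `diag(1, -1)`. -/
def Zgate : Matrix (Fin 2) (Fin 2) ℂ := !![1, 0; 0, -1]

/-- The n-qubit gate (a `2^n × 2^n` matrix, indexed by `Fin n → Fin 2`)
applying the single-qubit gate `A` on qubit `q` and the identity elsewhere. -/
def gateOn (n : ℕ) (q : Fin n) (A : Matrix (Fin 2) (Fin 2) ℂ) :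
    Matrix (Fin n → Fin 2) (Fin n → Fin 2) ℂ :=
  fun x y => A (x q) (y q) * ∏ i ∈ Finset.univ.erase q, (if x i = y i then (1 : ℂ) else 0)

/-- `R(P) = (1/2)(1 + e^{iπ/4})·I + (1/2)(1 − e^{iπ/4})·P`. -/
def Rop {m : Type*} [Fintype m] [DecidableEq m] (P : Matrix m m ℂ) : Matrix m m ℂ :=
  ((1 + Complex.exp (Real.pi * Complex.I / 4)) / 2) • (1 : Matrix m m ℂ)
    + ((1 - Complex.exp (Real.pi * Complex.I / 4)) / 2) • P

/-- `R†(P) = (1/2)(1 + e^{−iπ/4})·I + (1/2)(1 − e^{−iπ/4})·P`. -/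
def RopDag {m : Type*} [Fintype m] [DecidableEq m] (P : Matrix m m ℂ) : Matrix m m ℂ :=
  ((1 + Complex.exp (-(Real.pi * Complex.I / 4))) / 2) • (1 : Matrix m m ℂ)
    + ((1 - Complex.exp (-(Real.pi * Complex.I / 4))) / 2) • P

/-- The four single-qubit Pauli basis matrices `I, X, Y, Z`. -/
def pauli1 : Fin 4 → Matrix (Fin 2) (Fin 2) ℂ :=
  ![1, !![0, 1; 1, 0], !![0, -Complex.I; Complex.I, 0], !![1, 0; 0, -1]]

/-- The `n`-fold Kronecker product `Q_1 ⊗ ⋯ ⊗ Q_n` with each `Q_i ∈ {I, X, Y, Z}`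
selected by `f : Fin n → Fin 4`. -/
def pauliN (n : ℕ) (f : Fin n → Fin 4) : Matrix (Fin n → Fin 2) (Fin n → Fin 2) ℂ :=
  fun x y => ∏ i, pauli1 (f i) (x i) (y i)

/-- The channel representation of a `2^n × 2^n` matrix `U`: the `4^n × 4^n` matrix
with `(P, Q)` entry `2^{-n}·Tr(P U Q U†)`, indexed by the Pauli basis. -/
def chan (n : ℕ) (U : Matrix (Fin n → Fin 2) (Fin n → Fin 2) ℂ) :
    Matrix (Fin n → Fin 4) (Fin n → Fin 4) ℂ :=
  fun P Q => ((1 : ℂ) / 2 ^ n) * (pauliN n P * U * pauliN n Q * Uᴴ).trace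


lemma gateOn_smul (n : ℕ) (q : Fin n) (a : ℂ) (A : Matrix (Fin 2) (Fin 2) ℂ) :
    gateOn n q (a • A) = a • gateOn n q A := by
  ext x y; simp [gateOn, mul_assoc]

lemma gateOn_add (n : ℕ) (q : Fin n) (A B : Matrix (Fin 2) (Fin 2) ℂ) :
    gateOn n q (A + B) = gateOn n q A + gateOn n q B := by
  ext x y; simp [gateOn, add_mul]

lemma gateOn_one (n : ℕ) (q : Fin n) : gateOn n q (1 : Matrix (Fin 2) (Fin 2) ℂ) = 1 := by
  ext x y
  show (1 : Matrix (Fin 2) (Fin 2) ℂ) (x q) (y q) * _ = _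
  rw [Matrix.one_apply, Matrix.one_apply,
    Finset.mul_prod_erase Finset.univ (fun i => if x i = y i then (1:ℂ) else 0)
      (Finset.mem_univ q),
    Finset.prod_boole]
  simp [funext_iff]

lemma gateOn_conjTranspose (n : ℕ) (q : Fin n) (A : Matrix (Fin 2) (Fin 2) ℂ) :
    gateOn n q Aᴴ = (gateOn n q A)ᴴ := by
  ext x y
  simp only [Matrix.conjTranspose_apply, gateOn, star_mul', star_prod,
    apply_ite (star : ℂ → ℂ), star_one, star_zero]
  congr 1
  exact Finset.prod_congr rfl fun i _ => by simp [eq_comm]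

lemma Tgate_decomp :
    Tgate = ((1 + Complex.exp (Real.pi * Complex.I / 4)) / 2) • (1 : Matrix (Fin 2) (Fin 2) ℂ)
      + ((1 - Complex.exp (Real.pi * Complex.I / 4)) / 2) • Zgate := by
  ext i j
  fin_cases i <;> fin_cases j <;> simp [Tgate, Zgate, Matrix.one_apply] <;> ring

lemma Zgate_conjTranspose : Zgateᴴ = Zgate := by
  ext i j
  fin_cases i <;> fin_cases j <;> simp [Zgate]

lemma Tb_decomp (n : ℕ) (q : Fin n) (M : Matrix (Fin n → Fin 2) (Fin n → Fin 2) ℂ)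
    (h : M = gateOn n q Tgate ∨ M = (gateOn n q Tgate)ᴴ) :
    ∃ a b : ℂ, M = a • (1 : Matrix (Fin n → Fin 2) (Fin n → Fin 2) ℂ) + b • gateOn n q Zgate := by
  have hd : gateOn n q Tgate
      = ((1 + Complex.exp (Real.pi * Complex.I / 4)) / 2) •
          (1 : Matrix (Fin n → Fin 2) (Fin n → Fin 2) ℂ)
        + ((1 - Complex.exp (Real.pi * Complex.I / 4)) / 2) • gateOn n q Zgate := by
    rw [Tgate_decomp, gateOn_add, gateOn_smul, gateOn_smul, gateOn_one]
  rcases h with h | h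
  · exact ⟨_, _, h.trans hd⟩
  · refine ⟨(starRingEnd ℂ) ((1 + Complex.exp (Real.pi * Complex.I / 4)) / 2),
      (starRingEnd ℂ) ((1 - Complex.exp (Real.pi * Complex.I / 4)) / 2), ?_⟩
    rw [h, hd]
    rw [conjTranspose_add, conjTranspose_smul, conjTranspose_smul, conjTranspose_one,
      ← gateOn_conjTranspose, Zgate_conjTranspose]
    rfl

section helpers
variable {m : Type*} [Fintype m] [DecidableEq m]

lemma conj_mul_helper (M : Matrix m m ℂ) (hMl : Mᴴ * M = 1) (X Y : Matrix m m ℂ) :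
    M * (X * Y) * Mᴴ = (M * X * Mᴴ) * (M * Y * Mᴴ) := by
  simp only [Matrix.mul_assoc]
  rw [← Matrix.mul_assoc Mᴴ M, hMl, Matrix.one_mul]

lemma conj_affine_helper (M : Matrix m m ℂ) (hMr : M * Mᴴ = 1) (a b : ℂ) (X : Matrix m m ℂ) :
    M * (a • (1 : Matrix m m ℂ) + b • X) * Mᴴ = a • (1 : Matrix m m ℂ) + b • (M * X * Mᴴ) := by
  rw [Matrix.mul_add, Matrix.add_mul, Matrix.mul_smul, Matrix.smul_mul, Matrix.mul_one, hMr,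
    Matrix.mul_smul, Matrix.smul_mul]

end helpers

/-- product of two T-depth-1 blocks (Pauli-fixing version): no commutation
condition between `C₁` and `C₂` is needed if `C₁` fixes the Paulis `P_j = C₂ Z_{(j)} C₂†`. -/
theorem product_blocks_pauli_fixing (n : ℕ)
    (C₁ C₂ : Matrix (Fin n → Fin 2) (Fin n → Fin 2) ℂ)
    (hC₁ : C₁ ∈ Matrix.unitaryGroup (Fin n → Fin 2) ℂ)
    (hC₂ : C₂ ∈ Matrix.unitaryGroup (Fin n → Fin 2) ℂ)
    (S₁ S₂ : Finset (Fin n)) (hdisj : Disjoint S₁ S₂)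
    (Tb : Fin n → Matrix (Fin n → Fin 2) (Fin n → Fin 2) ℂ)
    (hTb : ∀ i, Tb i = gateOn n i Tgate ∨ Tb i = (gateOn n i Tgate)ᴴ)
    (hcomm : ∀ i j, i ≠ j → Commute (Tb i) (Tb j))
    (h₁ : ∀ i ∈ S₁, C₂ * gateOn n i Zgate * C₂ᴴ = gateOn n i Zgate)
    (h₂ : ∀ j ∈ S₂,
      C₁ * (C₂ * gateOn n j Zgate * C₂ᴴ) * C₁ᴴ = C₂ * gateOn n j Zgate * C₂ᴴ) :
    (C₁ * S₁.noncommProd Tb (fun i _ j _ h => hcomm i j h) * C₁ᴴ) *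
      (C₂ * S₂.noncommProd Tb (fun i _ j _ h => hcomm i j h) * C₂ᴴ) =
    (C₁ * C₂) * (S₁ ∪ S₂).noncommProd Tb (fun i _ j _ h => hcomm i j h) * (C₁ * C₂)ᴴ := by
  have hC1l : C₁ᴴ * C₁ = 1 := by
    simpa [Matrix.star_eq_conjTranspose] using hC₁.1
  have hC2l : C₂ᴴ * C₂ = 1 := by
    simpa [Matrix.star_eq_conjTranspose] using hC₂.1
  have hC1r : C₁ * C₁ᴴ = 1 := by
    simpa [Matrix.star_eq_conjTranspose] using hC₁.2
  have hC2r : C₂ * C₂ᴴ = 1 := by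
    simpa [Matrix.star_eq_conjTranspose] using hC₂.2
  set A := S₁.noncommProd Tb (fun i _ j _ h => hcomm i j h) with hAdef
  set B := S₂.noncommProd Tb (fun i _ j _ h => hcomm i j h) with hBdef
  have hA : C₂ * A * C₂ᴴ = A := by
    refine Finset.noncommProd_induction _ _ _ (fun M => C₂ * M * C₂ᴴ = M) ?_ ?_ ?_
    · intro a b ha hb
      rw [conj_mul_helper C₂ hC2l, ha, hb]
    · simp only [Matrix.mul_one, hC2r]
    · intro i hi
      obtain ⟨a, b, hab⟩ := Tb_decomp n i (Tb i) (hTb i)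
      rw [hab, conj_affine_helper C₂ hC2r, h₁ i hi]
  have hB : C₁ * (C₂ * B * C₂ᴴ) * C₁ᴴ = C₂ * B * C₂ᴴ := by
    refine Finset.noncommProd_induction _ _ _
      (fun M => C₁ * (C₂ * M * C₂ᴴ) * C₁ᴴ = C₂ * M * C₂ᴴ) ?_ ?_ ?_
    · intro a b ha hb
      rw [conj_mul_helper C₂ hC2l a b, conj_mul_helper C₁ hC1l, ha, hb]
    · simp only [Matrix.mul_one, hC2r, hC1r]
    · intro j hj
      obtain ⟨a, b, hab⟩ := Tb_decomp n j (Tb j) (hTb j)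
      rw [hab, conj_affine_helper C₂ hC2r, conj_affine_helper C₁ hC1r, h₂ j hj]
  have hAc : C₂ * A = A * C₂ := by
    calc C₂ * A = C₂ * A * (C₂ᴴ * C₂) := by rw [hC2l, Matrix.mul_one]
    _ = (C₂ * A * C₂ᴴ) * C₂ := by simp only [Matrix.mul_assoc]
    _ = A * C₂ := by rw [hA]
  have hunion : (S₁ ∪ S₂).noncommProd Tb (fun i _ j _ h => hcomm i j h) = A * B :=
    Finset.noncommProd_union_of_disjoint hdisj Tb _
  rw [hunion, Matrix.conjTranspose_mul]
  have hAD : A * (C₂ * B * C₂ᴴ) = C₂ * (A * B) * C₂ᴴ := by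
    simp only [← Matrix.mul_assoc]
    rw [← hAc]
  calc (C₁ * A * C₁ᴴ) * (C₂ * B * C₂ᴴ)
      = (C₁ * A * C₁ᴴ) * (C₁ * (C₂ * B * C₂ᴴ) * C₁ᴴ) := by rw [hB]
    _ = C₁ * (A * (C₂ * B * C₂ᴴ)) * C₁ᴴ := (conj_mul_helper C₁ hC1l _ _).symm
    _ = C₁ * (C₂ * (A * B) * C₂ᴴ) * C₁ᴴ := by rw [hAD]
    _ = C₁ * C₂ * (A * B) * (C₂ᴴ * C₁ᴴ) := by simp only [Matrix.mul_assoc]
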